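/- arXiv:2406.06945 — 2 statements merged into one kernel-verified Lean document; each statement's English description precedes it below -/
import Mathlib

section
/- Let Y be a real-valued random variable with all absolute moments finite and fix a nonzero real λ. Then for all integers n≥l≥0, (−1)^{n−l} S_{1,λ}^Y(n,l) = Σ_{k=l}^{n} {n brace k}_{Y,λ} S_{1,−λ}(k,l). -/
open MeasureTheory Finset

noncomputable section

/-- The degenerate falling factorial `(x)_{n,λ} = x(x-λ)⋯(x-(n-1)λ)`. -/
def dff (lam x : ℝ) (n : ℕ) : ℝ := ∏ i ∈ Finset.range n, (x - i * lam)

/-- The degenerate rising factorial `⟨x⟩_{n,λ} = x(x+λ)⋯(x+(n-1)λ)`. -/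
def drf (lam x : ℝ) (n : ℕ) : ℝ := ∏ i ∈ Finset.range n, (x + i * lam)

/-- The ordinary falling factorial `(x)_n = x(x-1)⋯(x-n+1)`. -/
def ffall (x : ℝ) (n : ℕ) : ℝ := ∏ i ∈ Finset.range n, (x - i)

/-- The ordinary rising factorial `⟨x⟩_n = x(x+1)⋯(x+n-1)`. -/
def frise (x : ℝ) (n : ℕ) : ℝ := ∏ i ∈ Finset.range n, (x + i)

/-- Composition `f ∘ g` of formal power series, valid when `g` has zero constant term. -/
def pscomp (f g : PowerSeries ℝ) : PowerSeries ℝ :=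
  PowerSeries.mk fun n =>
    ∑ k ∈ Finset.range (n + 1), PowerSeries.coeff (R := ℝ) k f * PowerSeries.coeff (R := ℝ) n (g ^ k)

/-- The degenerate moment generating series `F_Y = Σ_{n≥0} E[(Y)_{n,λ}] X^n/n!`. -/
def momSeries (lam : ℝ) {Ω : Type*} [MeasurableSpace Ω] (μ : Measure Ω) (Y : Ω → ℝ) :
    PowerSeries ℝ :=
  PowerSeries.mk fun n => (∫ ω, dff lam (Y ω) n ∂μ) / (n.factorial : ℝ)

/-- Taylor series at `u = 0` of the degenerate logarithm `log_λ(1+u)`: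
`Σ_{n≥1} λ^{n-1} (1)_{n,1/λ} u^n/n!`. -/
def degLogSeries (lam : ℝ) : PowerSeries ℝ :=
  PowerSeries.mk fun n => if n = 0 then 0 else lam ^ (n - 1) * dff (1 / lam) 1 n / (n.factorial : ℝ)

/-- `G_Y`, the degenerate cumulant generating series `log_{-λ}(F_Y)`, i.e. the substitution of
`F_Y - 1` into the Taylor series of `log_{-λ}(1+u)`. -/
def cumSeries (lam : ℝ) {Ω : Type*} [MeasurableSpace Ω] (μ : Measure Ω) (Y : Ω → ℝ) :
    PowerSeries ℝ :=
  pscomp (degLogSeries (-lam)) (momSeries lam μ Y - 1)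

/-- The degenerate cumulants `κ_{n,λ}(Y) := n!·(coefficient of X^n in G_Y)`. -/
def degCumulant (lam : ℝ) {Ω : Type*} [MeasurableSpace Ω] (μ : Measure Ω) (Y : Ω → ℝ)
    (n : ℕ) : ℝ :=
  (n.factorial : ℝ) * PowerSeries.coeff (R := ℝ) n (cumSeries lam μ Y)

/-- The probabilistic degenerate Stirling numbers of the second kind
`{n brace k}_{Y,λ} := n!·(coefficient of X^n in (F_Y - 1)^k/k!)`. -/
def braceY (lam : ℝ) {Ω : Type*} [MeasurableSpace Ω] (μ : Measure Ω) (Y : Ω → ℝ)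
    (n k : ℕ) : ℝ :=
  (n.factorial : ℝ) * PowerSeries.coeff (R := ℝ) n ((momSeries lam μ Y - 1) ^ k) / (k.factorial : ℝ)

/-- The probabilistic degenerate Stirling numbers of the first kind, defined by
`(-1)^{n-k} S_{1,λ}^Y(n,k) := n!·(coefficient of X^n in G_Y^k/k!)`. -/
def S1Y (lam : ℝ) {Ω : Type*} [MeasurableSpace Ω] (μ : Measure Ω) (Y : Ω → ℝ)
    (n k : ℕ) : ℝ :=
  (-1 : ℝ) ^ (n - k) * ((n.factorial : ℝ) * PowerSeries.coeff (R := ℝ) n ((cumSeries lam μ Y) ^ k) / (k.factorial : ℝ))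

/-- Taylor series of `log(1+u)`: `Σ_{n≥1} (-1)^{n-1} u^n/n`. -/
def logSeries : PowerSeries ℝ :=
  PowerSeries.mk fun n => if n = 0 then 0 else (-1 : ℝ) ^ (n - 1) / n

/-- `F^x := exp (x · Log F)` for a power series `F` with constant term `1`. -/
def psPow (F : PowerSeries ℝ) (x : ℝ) : PowerSeries ℝ :=
  pscomp (PowerSeries.exp ℝ) (PowerSeries.C (R := ℝ) x * pscomp logSeries (F - 1))

/-- `F ↦ F/X`, i.e. the shift sending `Σ a_{n+1} X^{n+1}` (with `a_0 = 0`) to `Σ a_{n+1} X^n`. -/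
def shiftDown (F : PowerSeries ℝ) : PowerSeries ℝ :=
  PowerSeries.mk fun n => PowerSeries.coeff (R := ℝ) (n + 1) F

/-- The probabilistic degenerate Bernoulli polynomials associated with `Y`:
`Σ_{n≥0} β_{n,λ}^Y(x) X^n/n! = (X/(F_Y-1))·F_Y^x`. -/
def probBernoulli (lam : ℝ) {Ω : Type*} [MeasurableSpace Ω] (μ : Measure Ω) (Y : Ω → ℝ)
    (n : ℕ) (x : ℝ) : ℝ :=
  (n.factorial : ℝ) *
    PowerSeries.coeff (R := ℝ) n ((shiftDown (momSeries lam μ Y - 1))⁻¹ * psPow (momSeries lam μ Y) x)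

/-- The probabilistic degenerate Euler polynomials associated with `Y`:
`Σ_{n≥0} 𝓔_{n,λ}^Y(x) X^n/n! = (2/(F_Y+1))·F_Y^x`. -/
def probEuler (lam : ℝ) {Ω : Type*} [MeasurableSpace Ω] (μ : Measure Ω) (Y : Ω → ℝ)
    (n : ℕ) (x : ℝ) : ℝ :=
  (n.factorial : ℝ) *
    PowerSeries.coeff (R := ℝ) n
      (PowerSeries.C (R := ℝ) 2 * (momSeries lam μ Y + 1)⁻¹ * psPow (momSeries lam μ Y) x)

/-! With `m = -λ`, the degenerate logarithm satisfies `1 + m·log_m(1+u) = (1+u)^m`. Since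
substitution of `F_Y - 1` is a ring homomorphism, `G_Y^l = log_m(1+u)^l ∘ (F_Y - 1)`, so
`n!·[X^n] G_Y^l / l! = Σ_k {n brace k}_{Y,λ} · k!·[u^k] log_m(1+u)^l / l!`. It remains to identify the
last factor with `S_{1,m}(k,l)`: expanding `(1+u)^{im} = (1 + m·log_m(1+u))^i` binomially proves
`(x)_k = Σ_j k!·[u^k] log_m(1+u)^j / j! · (x)_{j,m}` at every `x = im`, and at these points the
degenerate falling factorials form a triangular system with nonzero diagonal
(`(im)_{j,m} = m^j·i(i-1)⋯(i-j+1)`), so the expansion coefficients are unique. -/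

open PowerSeries

lemma coeff_pow_eq_zero_of_lt {R : Type*} [CommRing R] {g : R⟦X⟧} (hg : constantCoeff g = 0)
    {n k : ℕ} (h : n < k) : coeff n (g ^ k) = 0 :=
  coeff_of_lt_order _ ((Nat.cast_lt.mpr h).trans_le (le_order_pow_of_constantCoeff_eq_zero k hg))

lemma pscomp_eq_subst {g : ℝ⟦X⟧} (hg : constantCoeff g = 0) (f : ℝ⟦X⟧) :
    pscomp f g = f.subst g := by
  ext n
  rw [coeff_subst' (HasSubst.of_constantCoeff_zero' hg), pscomp, coeff_mk,
    finsum_eq_sum_of_support_subset _ (s := range (n + 1)) ?_]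
  · simp only [smul_eq_mul]
  · intro k hk
    by_contra hkn
    simp only [coe_range, Set.mem_Iio, not_lt] at hkn
    simp [coeff_pow_eq_zero_of_lt hg hkn] at hk

lemma binomialSeries_pow {R A : Type*} [CommRing R] [BinomialRing R] [Ring A] [Algebra R A]
    (r : R) (i : ℕ) : binomialSeries A r ^ i = binomialSeries A (i • r) := by
  induction i with
  | zero => simp
  | succ i ih => rw [pow_succ, ih, ← binomialSeries_add, succ_nsmul]

lemma factorial_mul_ringChoose (x : ℝ) (k : ℕ) : (k.factorial : ℝ) * Ring.choose x k = ffall x k := by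
  rw [Ring.choose_eq_smul, smul_eq_mul, ← mul_assoc, mul_inv_cancel₀ (by positivity), one_mul,
    ← Polynomial.aeval_eq_smeval, Polynomial.aeval_def, Polynomial.eval₂_eq_eval_map,
    descPochhammer_map, descPochhammer_eval_eq_prod_range, ffall]

lemma ffall_natCast (i j : ℕ) : ffall i j = i.descFactorial j := by
  rw [← descPochhammer_eval_eq_descFactorial, descPochhammer_eval_eq_prod_range, ffall]

lemma dff_mul_eq_pow_mul_ffall (m x : ℝ) (n : ℕ) : dff m (x * m) n = m ^ n * ffall x n := by
  calc dff m (x * m) n = ∏ i ∈ range n, ((x - i) * m) := prod_congr rfl fun i _ => by ring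
    _ = m ^ n * ffall x n := by rw [prod_mul_distrib, prod_const, card_range, mul_comm, ffall]

lemma one_add_C_mul_degLogSeries {m : ℝ} (hm : m ≠ 0) :
    1 + C m * degLogSeries m = PowerSeries.binomialSeries ℝ m := by
  ext n
  rw [map_add, coeff_C_mul, binomialSeries_coeff, smul_eq_mul, mul_one,
    ← mul_div_cancel_left₀ (Ring.choose m n) (by positivity : (n.factorial : ℝ) ≠ 0),
    factorial_mul_ringChoose]
  rcases n with _ | n
  · simp [degLogSeries, ffall]
  · have h := dff_mul_eq_pow_mul_ffall (1 / m) m (n + 1)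
    rw [mul_one_div_cancel hm] at h
    simp only [degLogSeries, coeff_one, coeff_mk, Nat.succ_ne_zero, if_false, zero_add,
      Nat.add_sub_cancel, h]
    rw [one_div_pow, pow_succ]
    field_simp

lemma constantCoeff_degLogSeries (m : ℝ) : constantCoeff (degLogSeries m) = 0 := by
  simp [degLogSeries, ← coeff_zero_eq_constantCoeff_apply]

/-- `S_{1,m}(n,k)` through its generating function `Σₙ S_{1,m}(n,k) uⁿ/n! = log_m(1+u)^k / k!`. -/
def degStirling1 (m : ℝ) (n k : ℕ) : ℝ :=
  n.factorial * coeff n (degLogSeries m ^ k) / k.factorial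

lemma degStirling1_eq_zero_of_lt (m : ℝ) {n k : ℕ} (h : n < k) : degStirling1 m n k = 0 := by
  rw [degStirling1, coeff_pow_eq_zero_of_lt (constantCoeff_degLogSeries m) h, mul_zero, zero_div]

lemma ffall_natCast_mul_eq_sum_degStirling1 {m : ℝ} (hm : m ≠ 0) (i k : ℕ) :
    ffall (i * m) k = ∑ j ∈ range (k + 1), degStirling1 m k j * dff m (i * m) j := by
  set t : ℕ → ℝ := fun j => k.factorial * (i.choose j * m ^ j * coeff k (degLogSeries m ^ j))
  have ht_of_gt_i : ∀ j ≥ i + 1, t j = 0 := fun j hj => by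
    simp [t, Nat.choose_eq_zero_of_lt (show i < j by omega)]
  have ht_of_gt_k : ∀ j ≥ k + 1, t j = 0 := fun j hj => by
    simp [t, coeff_pow_eq_zero_of_lt (constantCoeff_degLogSeries m) (show k < j by omega)]
  calc ffall (i * m) k
      = k.factorial * coeff k ((C m * degLogSeries m + 1) ^ i) := by
        rw [← factorial_mul_ringChoose, add_comm, one_add_C_mul_degLogSeries hm,
          binomialSeries_pow, binomialSeries_coeff, smul_eq_mul, mul_one, nsmul_eq_mul]
    _ = ∑ j ∈ range (i + 1), t j := by
        simp only [add_pow, one_pow, mul_one, mul_pow, ← map_pow, map_sum, t, mul_sum]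
        refine sum_congr rfl fun j _ => ?_
        rw [← map_natCast (C (R := ℝ)), mul_comm (C (m ^ j) * _), ← mul_assoc, ← map_mul,
          coeff_C_mul]
    _ = ∑ j ∈ range (k + 1), t j := by
        rw [← eventually_constant_sum ht_of_gt_i (by omega : i + 1 ≤ k + 1 + i),
          ← eventually_constant_sum ht_of_gt_k (Nat.le_add_right (k + 1) i)]
    _ = ∑ j ∈ range (k + 1), degStirling1 m k j * dff m (i * m) j := by
        refine sum_congr rfl fun j _ => ?_
        rw [dff_mul_eq_pow_mul_ffall, ffall_natCast, Nat.descFactorial_eq_factorial_mul_choose, degStirling1]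
        push_cast
        field_simp
        ring

lemma eq_zero_of_sum_mul_dff_natCast_mul_eq_zero {m : ℝ} (hm : m ≠ 0) {c : ℕ → ℝ} {N : ℕ}
    (h : ∀ i : ℕ, ∑ j ∈ range N, c j * dff m (i * m) j = 0) {j : ℕ} (hj : j < N) : c j = 0 := by
  induction j using Nat.strong_induction_on with
  | _ j ih =>
    have hdiag : dff m (j * m) j ≠ 0 := by
      rw [dff_mul_eq_pow_mul_ffall, ffall_natCast, Nat.descFactorial_self]
      exact mul_ne_zero (pow_ne_zero _ hm) (by positivity)
    have hj_term : c j * dff m (j * m) j = 0 := by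
      rw [← h j, sum_eq_single_of_mem j (mem_range.mpr hj)]
      intro t ht htj
      rcases htj.lt_or_gt with hlt | hgt
      · rw [ih t hlt (by simpa using ht), zero_mul]
      · rw [dff_mul_eq_pow_mul_ffall, ffall_natCast, Nat.descFactorial_eq_zero_iff_lt.mpr hgt]
        simp
    exact (mul_eq_zero.mp hj_term).resolve_right hdiag

lemma eq_degStirling1_of_ffall_eq_sum {m : ℝ} (hm : m ≠ 0) {S : ℕ → ℕ → ℝ}
    (hS : ∀ (x : ℝ) (n : ℕ), ffall x n = ∑ k ∈ range (n + 1), S n k * dff m x k)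
    {n k : ℕ} (hkn : k ≤ n) : S n k = degStirling1 m n k := by
  refine sub_eq_zero.mp (eq_zero_of_sum_mul_dff_natCast_mul_eq_zero hm
    (c := fun j => S n j - degStirling1 m n j) (fun i => ?_)
    (Nat.lt_succ_of_le hkn))
  simp only [sub_mul, sum_sub_distrib, ← hS, ← ffall_natCast_mul_eq_sum_degStirling1 hm, sub_self]

section Probabilistic

variable {Ω : Type*} [MeasurableSpace Ω] (μ : Measure Ω) (Y : Ω → ℝ) (lam : ℝ)

lemma constantCoeff_momSeries_sub_one [IsProbabilityMeasure μ] :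
    constantCoeff (momSeries lam μ Y - 1) = 0 := by
  rw [map_sub, map_one, ← coeff_zero_eq_constantCoeff_apply, momSeries, coeff_mk]
  simp [dff]

lemma coeff_cumSeries_pow [IsProbabilityMeasure μ] (n l : ℕ) :
    coeff n (cumSeries lam μ Y ^ l) =
      ∑ k ∈ range (n + 1), coeff k (degLogSeries (-lam) ^ l) * coeff n ((momSeries lam μ Y - 1) ^ k) := by
  have hg := constantCoeff_momSeries_sub_one μ Y lam
  rw [cumSeries, pscomp_eq_subst hg, ← subst_pow (HasSubst.of_constantCoeff_zero' hg),
    ← pscomp_eq_subst hg, pscomp, coeff_mk]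

end Probabilistic

theorem S1Y_eq_sum_braceY_mul_degStirling1_general {Ω : Type*} [MeasurableSpace Ω] (μ : MeasureTheory.Measure Ω)
    [MeasureTheory.IsProbabilityMeasure μ] (Y : Ω → ℝ)
    (lam : ℝ) (hlam : lam ≠ 0)
    (S1neg : ℕ → ℕ → ℝ)
    (hS1neg : ∀ (x : ℝ) (n : ℕ),
      ffall x n = ∑ k ∈ Finset.range (n + 1), S1neg n k * dff (-lam) x k)
    (n l : ℕ) :
    (-1 : ℝ) ^ (n - l) * S1Y lam μ Y n l =
      ∑ k ∈ Finset.Icc l n, braceY lam μ Y n k * S1neg k l := by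
  calc (-1 : ℝ) ^ (n - l) * S1Y lam μ Y n l
      = n.factorial * coeff n (cumSeries lam μ Y ^ l) / l.factorial := by
        rw [S1Y, ← mul_assoc, ← mul_pow, neg_one_mul, neg_neg, one_pow, one_mul]
    _ = ∑ k ∈ range (n + 1), braceY lam μ Y n k * degStirling1 (-lam) k l := by
        rw [coeff_cumSeries_pow, mul_sum, sum_div]
        refine sum_congr rfl fun k _ => ?_
        rw [braceY, degStirling1]
        field_simp
    _ = ∑ k ∈ Icc l n, braceY lam μ Y n k * degStirling1 (-lam) k l := by
        refine (sum_subset (fun k hk => ?_) fun k hkn hk => ?_).symm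
        · simpa [Nat.lt_succ_iff] using (mem_Icc.mp hk).2
        · rw [mem_range] at hkn
          rw [mem_Icc] at hk
          rw [degStirling1_eq_zero_of_lt _ (by omega), mul_zero]
    _ = ∑ k ∈ Icc l n, braceY lam μ Y n k * S1neg k l := by
        refine sum_congr rfl fun k hk => ?_
        rw [eq_degStirling1_of_ffall_eq_sum (neg_ne_zero.mpr hlam) hS1neg (mem_Icc.mp hk).1]

theorem S1Y_eq_sum_braceY_mul_degStirling1 {Ω : Type*} [MeasurableSpace Ω] (μ : MeasureTheory.Measure Ω)
    [MeasureTheory.IsProbabilityMeasure μ] (Y : Ω → ℝ) (hY : Measurable Y)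
    (hmom : ∀ n : ℕ, MeasureTheory.Integrable (fun ω => |Y ω| ^ n) μ)
    (lam : ℝ) (hlam : lam ≠ 0)
    (S1neg : ℕ → ℕ → ℝ)
    (hS1neg : ∀ (x : ℝ) (n : ℕ),
      ffall x n = ∑ k ∈ Finset.range (n + 1), S1neg n k * dff (-lam) x k)
    (n l : ℕ) (hln : l ≤ n) :
    (-1 : ℝ) ^ (n - l) * S1Y lam μ Y n l =
      ∑ k ∈ Finset.Icc l n, braceY lam μ Y n k * S1neg k l :=
  S1Y_eq_sum_braceY_mul_degStirling1_general μ Y lam hlam S1neg hS1neg n l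
end
end

section
/- Fix a nonzero real number λ and let Y be a standard normal random variable. Then for all integers n≥k≥0, {n brace k}_{Y,λ} = (1/k!) Σ_{l=0}^{k} C(k,l) (−1)^{k−l} Σ_{j=0}^{⌊n/2⌋} (l^j (2j)!/(2^j j!)) Σ_{m=2j}^{n} S_1(m,2j) {n brace m}_λ, where C(k,l) is the binomial coefficient. -/
open MeasureTheory Finset

noncomputable section

/-!
Writing `e_λ^x(t) = (1 + λt)^{x/λ}`, the series `F_Y` is `E[e_λ^Y(t)]`, the degenerate
moment series of the law of `Y`. The binomial identity
`(x + y)_{n,λ} = Σ C(n,p) (x)_{p,λ} (y)_{n-p,λ}` makes this series multiplicative under convolution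
of laws, and Gaussian laws are closed under convolution, so `F_Y ^ l` is the degenerate moment
series of `N(0, l)`. Expanding `(x)_{n,λ}` in powers of `x` through the two Stirling expansions,
its coefficients are read off from the moments `E[Z^{2j}] = l^j (2j)!/(2^j j!)` of `Z ~ N(0, l)`,
and
`(F_Y - 1)^k` is expanded binomially.
-/

open ProbabilityTheory Real
open scoped NNReal

theorem sum_range_succ_eq_sum_two_mul {M : Type*} [AddCommMonoid M] {f : ℕ → M}
    (hf : ∀ j, f (2 * j + 1) = 0) (n : ℕ) :
    ∑ i ∈ range (n + 1), f i = ∑ j ∈ range (n / 2 + 1), f (2 * j) := by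
  have hevens : (range (n + 1)).filter Even =
      (range (n / 2 + 1)).map ⟨(2 * ·), mul_right_injective₀ two_ne_zero⟩ := by
    ext i
    simp only [mem_filter, mem_range, mem_map, Function.Embedding.coeFn_mk, even_iff_two_dvd]
    constructor
    · rintro ⟨hi, j, rfl⟩
      exact ⟨j, by omega, rfl⟩
    · rintro ⟨j, hj, rfl⟩
      exact ⟨by omega, j, rfl⟩
  rw [← sum_filter_of_ne (p := Even) fun i _ hi => ?_, hevens, sum_map]
  · rfl
  · obtain ⟨j, rfl⟩ | he := (Nat.even_or_odd i).symm
    · exact absurd (hf j) hi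
    · exact he

theorem PowerSeries.coeff_sub_one_pow {R : Type*} [CommRing R] (F : PowerSeries R) (k n : ℕ) :
    coeff n ((F - 1) ^ k) =
      ∑ l ∈ range (k + 1), (k.choose l : R) * (-1) ^ (k - l) * coeff n (F ^ l) := by
  rw [sub_eq_add_neg, add_pow, map_sum]
  refine sum_congr rfl fun l _ => ?_
  have hC : (-1 : PowerSeries R) ^ (k - l) * (k.choose l : PowerSeries R) =
      C ((-1 : R) ^ (k - l) * k.choose l) := by
    simp
  rw [mul_assoc, hC, coeff_mul_C]
  ring

section DegenerateFallingFactorial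

theorem dff_succ (lam x : ℝ) (n : ℕ) : dff lam x (n + 1) = dff lam x n * (x - n * lam) :=
  prod_range_succ _ _

theorem dff_zero_left (lam : ℝ) (n : ℕ) : dff lam 0 n = if n = 0 then 1 else 0 := by
  cases n <;> simp [dff, prod_range_succ']

theorem dff_add (lam x y : ℝ) (n : ℕ) :
    dff lam (x + y) n =
      ∑ ij ∈ antidiagonal n, (n.choose ij.1 : ℝ) * (dff lam x ij.1 * dff lam y ij.2) := by
  induction n with
  | zero => simp [dff]
  | succ n ih =>
    rw [sum_antidiagonal_choose_succ_mul (fun i j => dff lam x i * dff lam y j), dff_succ, ih,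
      sum_mul, ← sum_add_distrib]
    refine sum_congr rfl fun ij hij => ?_
    have hn : (n : ℝ) = ij.1 + ij.2 := by exact_mod_cast (mem_antidiagonal.1 hij).symm
    rw [Nat.choose_symm_of_eq_add (mem_antidiagonal.1 hij).symm, dff_succ, dff_succ, hn]
    ring

open Polynomial in
theorem dff_eq_eval (lam x : ℝ) (n : ℕ) :
    dff lam x n = (∏ i ∈ range n, (X - C ((i : ℝ) * lam))).eval x := by
  simp [dff, eval_prod]

theorem continuous_dff (lam : ℝ) (n : ℕ) : Continuous (dff lam · n) := by
  unfold dff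
  fun_prop

theorem dff_eq_sum_pow {lam : ℝ} {S1 St2 : ℕ → ℕ → ℝ}
    (hS1 : ∀ (x : ℝ) (n : ℕ), ffall x n = ∑ k ∈ range (n + 1), S1 n k * x ^ k)
    (hSt2 : ∀ (x : ℝ) (n : ℕ), dff lam x n = ∑ k ∈ range (n + 1), St2 n k * ffall x k)
    (x : ℝ) (n : ℕ) :
    dff lam x n = ∑ i ∈ range (n + 1), (∑ m ∈ Icc i n, S1 m i * St2 n m) * x ^ i := by
  simp_rw [hSt2 x n, hS1, mul_sum, sum_mul]
  rw [sum_comm' (t' := range (n + 1)) (s' := fun i => Icc i n)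
    (fun m i => by simp only [mem_range, mem_Icc]; omega)]
  exact sum_congr rfl fun i _ => sum_congr rfl fun m _ => by ring

end DegenerateFallingFactorial

theorem factorial_mul_coeff_momSeries (lam : ℝ) (ρ : Measure ℝ) (n : ℕ) :
    (n.factorial : ℝ) * PowerSeries.coeff n (momSeries lam ρ id) = ∫ x, dff lam x n ∂ρ := by
  rw [momSeries, PowerSeries.coeff_mk, mul_div_cancel₀ _ (by positivity)]
  rfl

theorem momSeries_map {Ω : Type*} [MeasurableSpace Ω] (lam : ℝ) (μ : Measure Ω) {Y : Ω → ℝ}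
    (hY : AEMeasurable Y μ) : momSeries lam μ Y = momSeries lam (μ.map Y) id := by
  ext n
  simp only [momSeries, PowerSeries.coeff_mk, id,
    integral_map hY (continuous_dff lam n).aestronglyMeasurable]

section Convolution

variable {lam : ℝ} {ρ ν : Measure ℝ}

theorem integral_dff_conv [SFinite ρ] [SFinite ν]
    (hρ : ∀ n, Integrable (dff lam · n) ρ) (hν : ∀ n, Integrable (dff lam · n) ν) (n : ℕ) :
    ∫ x, dff lam x n ∂(ρ ∗ ν) = ∑ ij ∈ antidiagonal n,
      (n.choose ij.1 : ℝ) * ((∫ x, dff lam x ij.1 ∂ρ) * ∫ y, dff lam y ij.2 ∂ν) := by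
  rw [Measure.conv, integral_map (by fun_prop) (continuous_dff lam n).aestronglyMeasurable]
  simp_rw [dff_add]
  rw [integral_finsetSum _ fun ij _ => ((hρ ij.1).mul_prod (hν ij.2)).const_mul _]
  exact sum_congr rfl fun ij _ => by
    rw [integral_const_mul, integral_prod_mul (dff lam · ij.1) (dff lam · ij.2)]

theorem momSeries_conv [SFinite ρ] [SFinite ν]
    (hρ : ∀ n, Integrable (dff lam · n) ρ) (hν : ∀ n, Integrable (dff lam · n) ν) :
    momSeries lam (ρ ∗ ν) id = momSeries lam ρ id * momSeries lam ν id := by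
  ext n
  simp only [momSeries, PowerSeries.coeff_mul, PowerSeries.coeff_mk, id, integral_dff_conv hρ hν,
    sum_div]
  refine sum_congr rfl fun ⟨i, j⟩ hij => ?_
  obtain rfl := mem_antidiagonal.1 hij
  have hchoose : ((i + j).choose j : ℝ) ≠ 0 := by
    exact_mod_cast (Nat.choose_pos (Nat.le_add_left j i)).ne'
  rw [← Nat.add_choose_mul_factorial_mul_factorial i j, Nat.choose_symm_add]
  push_cast
  field_simp

theorem momSeries_dirac_zero : momSeries lam (Measure.dirac 0) id = 1 := by
  ext n
  rw [momSeries, PowerSeries.coeff_mk, integral_dirac, id, dff_zero_left, PowerSeries.coeff_one]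
  split_ifs with h <;> simp [h]

end Convolution

section Gaussian

open Polynomial in
theorem integrable_eval_of_integrable_pow {ρ : Measure ℝ}
    (h : ∀ i : ℕ, Integrable (fun x => x ^ i) ρ) (p : ℝ[X]) :
    Integrable (fun x => p.eval x) ρ := by
  simp_rw [eval_eq_sum_range]
  exact integrable_finsetSum _ fun i _ => (h i).const_mul _

theorem integrable_pow_gaussianReal (μ : ℝ) (v : ℝ≥0) (i : ℕ) :
    Integrable (fun x => x ^ i) (gaussianReal μ v) :=
  (memLp_id_gaussianReal i).integrable_norm_pow'.mono' (by fun_prop)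
    (ae_of_all _ fun x => by simp)

theorem integrable_dff_gaussianReal (lam μ : ℝ) (v : ℝ≥0) (n : ℕ) :
    Integrable (dff lam · n) (gaussianReal μ v) := by
  simp_rw [dff_eq_eval]
  exact integrable_eval_of_integrable_pow (integrable_pow_gaussianReal μ v) _

theorem momSeries_gaussianReal_pow (lam : ℝ) (l : ℕ) :
    momSeries lam (gaussianReal 0 1) id ^ l = momSeries lam (gaussianReal 0 l) id := by
  induction l with
  | zero => simp [gaussianReal_zero_var, momSeries_dirac_zero]
  | succ l ih =>
    rw [pow_succ, ih, ← momSeries_conv (integrable_dff_gaussianReal lam 0 _)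
      (integrable_dff_gaussianReal lam 0 _), gaussianReal_conv_gaussianReal]
    simp

theorem integral_gaussianReal_zero_one (f : ℝ → ℝ) :
    ∫ x, f x ∂gaussianReal 0 1 = (√(2 * π))⁻¹ * ∫ x, f x * exp (-x ^ 2 / 2) := by
  rw [integral_gaussianReal_eq_integral_smul one_ne_zero, ← integral_const_mul]
  congr with x
  simp [gaussianPDFReal]
  ring

theorem integrable_pow_mul_exp_neg_sq_div_two (i : ℕ) :
    Integrable fun x : ℝ => x ^ i * exp (-x ^ 2 / 2) := by
  have h := integrable_rpow_mul_exp_neg_mul_sq (b := 1 / 2) (by norm_num)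
    (s := i) (by linarith [(Nat.cast_nonneg i : (0 : ℝ) ≤ i)])
  simp only [rpow_natCast] at h
  convert h using 4
  ring

theorem hasDerivAt_exp_neg_sq_div_two (x : ℝ) :
    HasDerivAt (fun x => exp (-x ^ 2 / 2)) (-x * exp (-x ^ 2 / 2)) x := by
  have h : HasDerivAt (fun x : ℝ => -x ^ 2 / 2) (-x) x :=
    ((hasDerivAt_pow 2 x).fun_neg.div_const 2).congr_deriv (by push_cast; ring)
  exact h.exp.congr_deriv (mul_comm _ _)

/-- Integration by parts against `x ^ (i + 1)`. -/
theorem integral_pow_add_two_mul_exp_neg_sq_div_two (i : ℕ) :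
    ∫ x, x ^ (i + 2) * exp (-x ^ 2 / 2) = (i + 1) * ∫ x, x ^ i * exp (-x ^ 2 / 2) := by
  have hderiv (x : ℝ) : HasDerivAt (fun x => x ^ (i + 1) * exp (-x ^ 2 / 2))
      ((i + 1) * (x ^ i * exp (-x ^ 2 / 2)) - x ^ (i + 2) * exp (-x ^ 2 / 2)) x := by
    refine ((hasDerivAt_pow (i + 1) x).fun_mul (hasDerivAt_exp_neg_sq_div_two x)).congr_deriv ?_
    push_cast [Nat.add_sub_cancel]
    ring
  have h := integral_eq_zero_of_hasDerivAt_of_integrable hderiv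
    (((integrable_pow_mul_exp_neg_sq_div_two i).const_mul _).sub
      (integrable_pow_mul_exp_neg_sq_div_two (i + 2)))
    (integrable_pow_mul_exp_neg_sq_div_two (i + 1))
  rw [integral_sub ((integrable_pow_mul_exp_neg_sq_div_two i).const_mul _)
    (integrable_pow_mul_exp_neg_sq_div_two (i + 2)), integral_const_mul, sub_eq_zero] at h
  exact h.symm

theorem integral_pow_add_two_gaussianReal (i : ℕ) :
    ∫ x, x ^ (i + 2) ∂gaussianReal 0 1 = (i + 1) * ∫ x, x ^ i ∂gaussianReal 0 1 := by
  rw [integral_gaussianReal_zero_one, integral_gaussianReal_zero_one,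
    integral_pow_add_two_mul_exp_neg_sq_div_two]
  ring

theorem integral_pow_gaussianReal_eq_sqrt_pow_mul (v : ℝ≥0) (i : ℕ) :
    ∫ x, x ^ i ∂gaussianReal 0 v = √v ^ i * ∫ x, x ^ i ∂gaussianReal 0 1 := by
  have hscale : gaussianReal 0 v = (gaussianReal 0 1).map (√v * ·) := by
    rw [gaussianReal_map_const_mul, mul_zero, mul_one]
    congr
    ext
    simp
  rw [hscale, integral_map (by fun_prop) (by fun_prop), ← integral_const_mul]
  simp_rw [mul_pow]

theorem integral_pow_odd_gaussianReal (v : ℝ≥0) (j : ℕ) :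
    ∫ x, x ^ (2 * j + 1) ∂gaussianReal 0 v = 0 := by
  suffices ∫ x, x ^ (2 * j + 1) ∂gaussianReal 0 1 = 0 by
    rw [integral_pow_gaussianReal_eq_sqrt_pow_mul, this, mul_zero]
  induction j with
  | zero => simp [integral_id_gaussianReal]
  | succ j ih =>
    rw [show 2 * (j + 1) + 1 = 2 * j + 1 + 2 by ring, integral_pow_add_two_gaussianReal, ih,
      mul_zero]

theorem integral_pow_even_gaussianReal (v : ℝ≥0) (j : ℕ) :
    ∫ x, x ^ (2 * j) ∂gaussianReal 0 v =
      v ^ j * ((2 * j).factorial / (2 ^ j * j.factorial)) := by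
  rw [integral_pow_gaussianReal_eq_sqrt_pow_mul, pow_mul, Real.sq_sqrt v.coe_nonneg]
  congr 1
  induction j with
  | zero => simp
  | succ j ih =>
    rw [show 2 * (j + 1) = 2 * j + 2 by ring, integral_pow_add_two_gaussianReal, ih,
      Nat.factorial_succ, Nat.factorial_succ, Nat.factorial_succ]
    push_cast
    field_simp
    ring

theorem integral_dff_gaussianReal {lam : ℝ} {n : ℕ} {D : ℕ → ℝ}
    (hD : ∀ x, dff lam x n = ∑ i ∈ range (n + 1), D i * x ^ i) (v : ℝ≥0) :
    ∫ x, dff lam x n ∂gaussianReal 0 v = ∑ j ∈ range (n / 2 + 1),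
      (v : ℝ) ^ j * (2 * j).factorial / (2 ^ j * j.factorial) * D (2 * j) := by
  simp_rw [hD]
  rw [integral_finsetSum _ fun i _ => (integrable_pow_gaussianReal 0 v i).const_mul _]
  simp_rw [integral_const_mul]
  rw [sum_range_succ_eq_sum_two_mul fun j => by rw [integral_pow_odd_gaussianReal, mul_zero]]
  simp_rw [integral_pow_even_gaussianReal]
  exact sum_congr rfl fun j _ => by ring

end Gaussian

theorem gaussian_braceY_eq_sum_general {Ω : Type*} [MeasurableSpace Ω] (μ : MeasureTheory.Measure Ω)
    (Y : Ω → ℝ) (hY : Measurable Y)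
    (hYlaw : μ.map Y = ProbabilityTheory.gaussianReal 0 1)
    (lam : ℝ)
    (S1 : ℕ → ℕ → ℝ)
    (hS1 : ∀ (x : ℝ) (n : ℕ), ffall x n = ∑ k ∈ Finset.range (n + 1), S1 n k * x ^ k)
    (St2 : ℕ → ℕ → ℝ)
    (hSt2 : ∀ (x : ℝ) (n : ℕ),
      dff lam x n = ∑ k ∈ Finset.range (n + 1), St2 n k * ffall x k)
    (n k : ℕ) :
    braceY lam μ Y n k =
      (1 / (k.factorial : ℝ)) * ∑ l ∈ Finset.range (k + 1),
        (k.choose l : ℝ) * (-1 : ℝ) ^ (k - l) *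
          ∑ j ∈ Finset.range (n / 2 + 1),
            (l : ℝ) ^ j * ((2 * j).factorial : ℝ) / (2 ^ j * (j.factorial : ℝ)) *
              ∑ m ∈ Finset.Icc (2 * j) n, S1 m (2 * j) * St2 n m := by
  have hF : momSeries lam μ Y = momSeries lam (gaussianReal 0 1) id := by
    rw [momSeries_map lam μ hY.aemeasurable, hYlaw]
  have hpow (l : ℕ) : (n.factorial : ℝ) * PowerSeries.coeff n (momSeries lam μ Y ^ l) =
      ∑ j ∈ range (n / 2 + 1), (l : ℝ) ^ j * (2 * j).factorial / (2 ^ j * j.factorial) *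
        ∑ m ∈ Icc (2 * j) n, S1 m (2 * j) * St2 n m := by
    rw [hF, momSeries_gaussianReal_pow, factorial_mul_coeff_momSeries,
      integral_dff_gaussianReal (dff_eq_sum_pow hS1 hSt2 · n), NNReal.coe_natCast]
  rw [braceY, PowerSeries.coeff_sub_one_pow, mul_sum, sum_div, mul_sum]
  refine sum_congr rfl fun l _ => ?_
  rw [← hpow l]
  ring

theorem gaussian_braceY_eq_sum {Ω : Type*} [MeasurableSpace Ω] (μ : MeasureTheory.Measure Ω)
    [MeasureTheory.IsProbabilityMeasure μ] (Y : Ω → ℝ) (hY : Measurable Y)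
    (hYlaw : μ.map Y = ProbabilityTheory.gaussianReal 0 1)
    (lam : ℝ) (hlam : lam ≠ 0)
    (S1 : ℕ → ℕ → ℝ)
    (hS1 : ∀ (x : ℝ) (n : ℕ), ffall x n = ∑ k ∈ Finset.range (n + 1), S1 n k * x ^ k)
    (St2 : ℕ → ℕ → ℝ)
    (hSt2 : ∀ (x : ℝ) (n : ℕ),
      dff lam x n = ∑ k ∈ Finset.range (n + 1), St2 n k * ffall x k)
    (n k : ℕ) (hkn : k ≤ n) :
    braceY lam μ Y n k =
      (1 / (k.factorial : ℝ)) * ∑ l ∈ Finset.range (k + 1),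
        (k.choose l : ℝ) * (-1 : ℝ) ^ (k - l) *
          ∑ j ∈ Finset.range (n / 2 + 1),
            (l : ℝ) ^ j * ((2 * j).factorial : ℝ) / (2 ^ j * (j.factorial : ℝ)) *
              ∑ m ∈ Finset.Icc (2 * j) n, S1 m (2 * j) * St2 n m :=
  gaussian_braceY_eq_sum_general μ Y hY hYlaw lam S1 hS1 St2 hSt2 n k

end
end
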